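/- A median graph G with at least three vertices is 2-connected if and only if the link Link(x) is connected for every vertex x of G. -/

import Mathlib

open SimpleGraph

/-- The metric interval between `u` and `v` in a graph `G`. -/
def gInterval {V : Type} (G : SimpleGraph V) (u v : V) : Set V :=
  {z | G.dist u z + G.dist z v = G.dist u v}

/-- `G` is a median graph: it is connected and every triple of vertices has a
unique median. -/
def IsMedianGraph {V : Type} (G : SimpleGraph V) : Prop :=
  G.Connected ∧ ∀ u v w : V,
    ∃! m : V, m ∈ gInterval G u v ∧ m ∈ gInterval G v w ∧ m ∈ gInterval G u w

/-- The link of a vertex `x` in `G`: its vertices are the neighbors of `x`, two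
neighbors `y, z` being adjacent iff `y ≠ z` and there is a vertex `w ≠ x`
adjacent to both `y` and `z` (so that `x, y, w, z` span a 4-cycle). -/
def Link {V : Type} (G : SimpleGraph V) (x : V) :
    SimpleGraph {y : V // G.Adj x y} :=
  SimpleGraph.fromRel
    (fun y z => ∃ w : V, w ≠ x ∧ G.Adj (y : V) w ∧ G.Adj (z : V) w)

/-- A graph (with at least three vertices) is 2-connected if it is connected
and remains connected after deletion of any single vertex. -/
def TwoConnected {V : Type} (G : SimpleGraph V) : Prop :=
  G.Connected ∧ ∀ v : V, (G.induce {u | u ≠ v}).Connected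

/-!
Removing a vertex `v` keeps a connected graph connected iff the neighbours of `v` stay mutually
reachable without `v`. If the link of `v` is connected this holds in any connected graph: a link
edge `y z` comes with a path `y w z` avoiding `v`, and a walk passing through `v` enters and leaves
it at two neighbours of `v`.

Conversely, in a median graph send each vertex `u ≠ x` to a gate, a neighbour of `x` on a geodesic
from `x` to `u`. Distances to `x` change by exactly one along an edge, so of the intervals
`I(x,u)`, `I(x,r)` of an edge `u r` one contains the other; and two neighbours of `x` in a common
interval `I(x,p)` are joined in the link through their median with `p`. Hence a walk avoiding `x`
projects to a walk in the link of `x`.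
-/

namespace SimpleGraph

variable {V W : Type} {G : SimpleGraph V}

lemma Reachable.map_of_forall_adj {H : SimpleGraph W} (f : V → W)
    (hf : ∀ a b, G.Adj a b → H.Reachable (f a) (f b)) {a b : V} (h : G.Reachable a b) :
    H.Reachable (f a) (f b) := by
  obtain ⟨p⟩ := h
  induction p with
  | nil => rfl
  | cons hadj _ ih => exact (hf _ _ hadj).trans ih

lemma Reachable.induce_ne_of_link {v : V} {a b : {y // G.Adj v y}}
    (h : (Link G v).Reachable a b) :
    (G.induce {u | u ≠ v}).Reachable ⟨a, a.2.ne'⟩ ⟨b, b.2.ne'⟩ := by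
  refine h.map_of_forall_adj (fun a : {y // G.Adj v y} => (⟨a, a.2.ne'⟩ : {u | u ≠ v}))
    fun a b hab => ?_
  obtain ⟨-, ⟨w, hwv, haw, hbw⟩ | ⟨w, hwv, hbw, haw⟩⟩ := (fromRel_adj _ _ _).mp hab <;>
  · have haw' : (G.induce {u | u ≠ v}).Adj ⟨a, a.2.ne'⟩ ⟨w, hwv⟩ := haw
    have hwb' : (G.induce {u | u ≠ v}).Adj ⟨w, hwv⟩ ⟨b, b.2.ne'⟩ := hbw.symm
    exact haw'.reachable.trans hwb'.reachable

lemma Connected.induce_ne_connected_of_link_connected (hc : G.Connected) {v : V}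
    (hv : (Link G v).Connected) : (G.induce {u | u ≠ v}).Connected := by
  classical
  obtain ⟨n₀⟩ := hv.nonempty
  let φ : V → {u | u ≠ v} := fun u =>
    if hu : u = v then ⟨n₀, n₀.2.ne'⟩ else ⟨u, hu⟩
  have hφ : ∀ a b, G.Adj a b → (G.induce {u | u ≠ v}).Reachable (φ a) (φ b) := by
    have hlink : ∀ b (hb : G.Adj v b),
        (G.induce {u | u ≠ v}).Reachable ⟨n₀, n₀.2.ne'⟩ ⟨b, hb.ne'⟩ :=
      fun b hb => (hv.preconnected n₀ ⟨b, hb⟩).induce_ne_of_link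
    intro a b hab
    by_cases ha : a = v <;> by_cases hb : b = v
    · exact absurd (ha.trans hb.symm) hab.ne
    · subst ha
      simpa [φ, hb] using hlink b hab
    · subst hb
      simpa [φ, ha] using (hlink a hab.symm).symm
    · have hab' : (G.induce {u | u ≠ v}).Adj ⟨a, ha⟩ ⟨b, hb⟩ := hab
      simpa [φ, ha, hb] using hab'.reachable
  have : Nonempty {u | u ≠ v} := ⟨⟨n₀, n₀.2.ne'⟩⟩
  refine ⟨fun p q => ?_⟩
  have hφ_id : ∀ u : {u | u ≠ v}, φ u = u := fun u => dif_neg u.2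
  simpa only [hφ_id] using (hc.preconnected p q).map_of_forall_adj φ hφ

end SimpleGraph

section Interval

variable {V : Type} {G : SimpleGraph V}

lemma mem_gInterval {u v z : V} :
    z ∈ gInterval G u v ↔ G.dist u z + G.dist z v = G.dist u v :=
  Iff.rfl

lemma right_mem_gInterval (u v : V) : v ∈ gInterval G u v := by
  simp [mem_gInterval]

lemma SimpleGraph.Connected.eq_or_eq_of_mem_gInterval_of_adj (hc : G.Connected) {p q z : V}
    (h : G.Adj p q) (hz : z ∈ gInterval G p q) : z = p ∨ z = q := by
  rw [mem_gInterval, dist_eq_one_iff_adj.mpr h] at hz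
  rcases Nat.add_eq_one_iff.mp hz with ⟨hpz, -⟩ | ⟨-, hzq⟩
  · exact Or.inl (hc.dist_eq_zero_iff.mp hpz).symm
  · exact Or.inr (hc.dist_eq_zero_iff.mp hzq)

lemma SimpleGraph.Connected.exists_adj_mem_gInterval (hc : G.Connected) {x p : V}
    (hne : p ≠ x) : ∃ n, G.Adj x n ∧ n ∈ gInterval G x p := by
  obtain ⟨w, hw⟩ := hc.exists_walk_length_eq_dist x p
  cases w with
  | nil => exact absurd rfl hne
  | @cons _ n _ hxn w' =>
    refine ⟨n, hxn, ?_⟩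
    have hxn' : G.dist x n = 1 := dist_eq_one_iff_adj.mpr hxn
    have hnp : G.dist n p ≤ w'.length := dist_le w'
    have htri : G.dist x p ≤ G.dist x n + G.dist n p := hc.dist_triangle
    simp only [Walk.length_cons] at hw
    simp only [mem_gInterval]
    omega

lemma SimpleGraph.Connected.gInterval_subset_of_adj (hc : G.Connected) {x p q : V}
    (h : G.Adj p q) (hd : G.dist x q = G.dist x p + 1) : gInterval G x p ⊆ gInterval G x q := by
  intro z hz
  have hzq : G.dist z q ≤ G.dist z p + G.dist p q := hc.dist_triangle
  have hxq : G.dist x q ≤ G.dist x z + G.dist z q := hc.dist_triangle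
  simp only [mem_gInterval, dist_eq_one_iff_adj.mpr h] at hz hzq ⊢
  omega

end Interval

namespace IsMedianGraph

variable {V : Type} {G : SimpleGraph V}

lemma dist_eq_add_one_or_of_adj (hG : IsMedianGraph G) (x : V) {p q : V} (h : G.Adj p q) :
    G.dist x q = G.dist x p + 1 ∨ G.dist x p = G.dist x q + 1 := by
  obtain ⟨m, ⟨hm, hqx, hpx⟩, -⟩ := hG.2 p q x
  have hpq : G.dist p q = 1 := dist_eq_one_iff_adj.mpr h
  have hqp : G.dist q p = 1 := dist_eq_one_iff_adj.mpr h.symm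
  rcases hG.1.eq_or_eq_of_mem_gInterval_of_adj h hm with rfl | rfl
  · simp only [mem_gInterval, hqp] at hqx
    rw [SimpleGraph.dist_comm (u := x), SimpleGraph.dist_comm (u := x)]
    omega
  · simp only [mem_gInterval, hpq] at hpx
    rw [SimpleGraph.dist_comm (u := x), SimpleGraph.dist_comm (u := x)]
    omega

lemma exists_common_adj_of_mem_gInterval (hG : IsMedianGraph G) {x p n n' : V}
    (hn : G.Adj x n) (hn' : G.Adj x n') (hne : n ≠ n')
    (hi : n ∈ gInterval G x p) (hi' : n' ∈ gInterval G x p) :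
    ∃ w, w ≠ x ∧ G.Adj n w ∧ G.Adj n' w := by
  obtain ⟨hc, hmed⟩ := hG
  obtain ⟨m, ⟨hm, hn'p, hnp⟩, -⟩ := hmed n n' p
  simp only [mem_gInterval] at hm hn'p hnp hi hi'
  have hxn : G.dist x n = 1 := dist_eq_one_iff_adj.mpr hn
  have hxn' : G.dist x n' = 1 := dist_eq_one_iff_adj.mpr hn'
  have hnx : G.dist n x = 1 := dist_eq_one_iff_adj.mpr hn.symm
  have hnn' : G.dist n n' ≤ G.dist n x + G.dist x n' := hc.dist_triangle
  have hmn : m ≠ n := by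
    rintro rfl
    have hn'm : G.dist n' m = 0 := by omega
    exact hne (hc.dist_eq_zero_iff.mp hn'm).symm
  have hmn' : m ≠ n' := by
    rintro rfl
    have hnm : G.dist n m = 0 := by omega
    exact hne (hc.dist_eq_zero_iff.mp hnm)
  have hnm_pos := hc.pos_dist_of_ne hmn.symm
  have hmn'_pos := hc.pos_dist_of_ne hmn'
  have hmx : m ≠ x := by
    rintro rfl
    omega
  have hnm_one : G.dist n m = 1 := by omega
  have hn'm_one : G.dist n' m = 1 := by rw [SimpleGraph.dist_comm]; omega
  exact ⟨m, hmx, dist_eq_one_iff_adj.mp hnm_one, dist_eq_one_iff_adj.mp hn'm_one⟩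

lemma link_reachable_of_mem_gInterval (hG : IsMedianGraph G) {x p : V}
    {n n' : {y // G.Adj x y}} (hi : (n : V) ∈ gInterval G x p)
    (hi' : (n' : V) ∈ gInterval G x p) :
    (Link G x).Reachable n n' := by
  by_cases hne : n = n'
  · rw [hne]
  · refine Adj.reachable ((fromRel_adj _ _ _).mpr ⟨hne, Or.inl ?_⟩)
    exact hG.exists_common_adj_of_mem_gInterval n.2 n'.2 (Subtype.coe_ne_coe.mpr hne) hi hi'

lemma link_connected_of_induce_ne_connected (hG : IsMedianGraph G) {x : V}
    (hx : (G.induce {u | u ≠ x}).Connected) : (Link G x).Connected := by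
  have hgate : ∀ u : {u | u ≠ x}, ∃ n : {y // G.Adj x y}, (n : V) ∈ gInterval G x u :=
    fun u =>
      let ⟨n, hn, hi⟩ := hG.1.exists_adj_mem_gInterval u.2
      ⟨⟨n, hn⟩, hi⟩
  choose g hg using hgate
  have hg_adj : ∀ u r, (G.induce {u | u ≠ x}).Adj u r → (Link G x).Reachable (g u) (g r) := by
    intro u r hur
    rcases hG.dist_eq_add_one_or_of_adj x hur with hd | hd
    · exact hG.link_reachable_of_mem_gInterval (hG.1.gInterval_subset_of_adj hur hd (hg u)) (hg r)
    · exact hG.link_reachable_of_mem_gInterval (hg u)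
        (hG.1.gInterval_subset_of_adj hur.symm hd (hg r))
  have hg_self : ∀ n : {y // G.Adj x y}, (Link G x).Reachable n (g ⟨n, n.2.ne'⟩) :=
    fun n => hG.link_reachable_of_mem_gInterval (right_mem_gInterval x n) (hg _)
  obtain ⟨u⟩ := hx.nonempty
  have : Nonempty {y // G.Adj x y} := ⟨g u⟩
  exact ⟨fun n n' => (hg_self n).trans
    (((hx.preconnected _ _).map_of_forall_adj g hg_adj).trans (hg_self n').symm)⟩

end IsMedianGraph

theorem median_twoConnected_iff_links_connected_general {V : Type} (G : SimpleGraph V)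
    (hG : IsMedianGraph G) :
    TwoConnected G ↔ ∀ x : V, (Link G x).Connected :=
  ⟨fun h x => hG.link_connected_of_induce_ne_connected (h.2 x),
    fun h => ⟨hG.1, fun v => hG.1.induce_ne_connected_of_link_connected (h v)⟩⟩

/-- A median graph with at least three vertices is 2-connected iff the link of
every vertex is connected. -/
theorem median_twoConnected_iff_links_connected {V : Type} (G : SimpleGraph V)
    (hG : IsMedianGraph G) (hcard : ∃ a b c : V, a ≠ b ∧ a ≠ c ∧ b ≠ c) :
    TwoConnected G ↔ ∀ x : V, (Link G x).Connected :=
  median_twoConnected_iff_links_connected_general G hG
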